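/- arXiv:2207.12487 — 2 statements merged into one kernel-verified Lean document; each statement's English description precedes it below -/
import Mathlib

section
/- Let a, b be integers with ab(4a+27b) ≠ 0, d = 4a + 27b, and let E_{a,b}: y^2 = x^3 + a(x-b)^2 and Ê_{a,b}: y^2 = x^3 - 27a(x-d)^2. Then the map ψ_{a,b}(x,y) = (9(x^3 + (4/3)a x^2 - 4ab x + 4ab^2)/x^2, 27 y (x^3 + 4ab x - 8ab^2)/x^3) sends points (x,y) of E_{a,b} with x ≠ 0 to points of Ê_{a,b}. -/
/-- The map `ψ_{a,b}` sends points `(x,y)` of `E_{a,b} : y² = x³ + a(x-b)²` with `x ≠ 0` to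
points of `Ê_{a,b} : y² = x³ - 27a(x-d)²` where `d = 4a + 27b`. -/
theorem stmt11 (a b : ℤ) (hab : a * b * (4 * a + 27 * b) ≠ 0) (d : ℤ) (hd : d = 4 * a + 27 * b)
    (x y : ℚ) (h : y ^ 2 = x ^ 3 + (a : ℚ) * (x - (b : ℚ)) ^ 2) (hx : x ≠ 0) :
    (27 * y * (x ^ 3 + 4 * (a : ℚ) * (b : ℚ) * x - 8 * (a : ℚ) * (b : ℚ) ^ 2) / x ^ 3) ^ 2
      = (9 * (x ^ 3 + (4 / 3 : ℚ) * (a : ℚ) * x ^ 2 - 4 * (a : ℚ) * (b : ℚ) * x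
            + 4 * (a : ℚ) * (b : ℚ) ^ 2) / x ^ 2) ^ 3
        - 27 * (a : ℚ) *
          ((9 * (x ^ 3 + (4 / 3 : ℚ) * (a : ℚ) * x ^ 2 - 4 * (a : ℚ) * (b : ℚ) * x
            + 4 * (a : ℚ) * (b : ℚ) ^ 2) / x ^ 2) - (d : ℚ)) ^ 2 := by
  subst hd
  rw [div_pow, mul_pow, mul_pow, h]
  push_cast
  field_simp
  ring
end

section
/- Let ℓ be a prime of the form ℓ = t^2 + 27 for some integer t. Then the point (ℓ, tℓ) lies on the elliptic curve E: y^2 = x^3 - 27 ℓ^2 and has infinite order; in particular the Mordell–Weil rank of E over Q is at least 1. -/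
/-! On `y² = x³ + k` with `k` a nonzero `2`-adic integer, a point with `v₂(x) < 0` has
`2 v₂(y) = 3 v₂(x)`, so the tangent slope `λ = 3x²/2y` satisfies `v₂(λ²) = v₂(x) - 2 < v₂(2x)`
and doubling, `x ↦ λ² - 2x`, lowers `v₂(x)` by exactly `2`. The multiples `2ⁿ Q` are then
pairwise distinct, so `Q` has infinite order. For `P = (ℓ, tℓ)` with `ℓ` odd and `t ≠ 0` the same
computation gives `v₂(x(2P)) = -2 - 2 v₂(t) < 0`, so `2P`, hence `P`, has infinite order. -/

open WeierstrassCurve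

open WeierstrassCurve.Affine Function

local notation "v₂" => padicValRat 2

lemma not_isOfFinAddOrder_of_injective_nsmul_comp {G : Type*} [AddMonoid G] {g : G} {f : ℕ → ℕ}
    (hf : Injective fun n => f n • g) : ¬IsOfFinAddOrder g := fun hg =>
  Set.infinite_range_of_injective hf <|
    hg.finite_multiples.subset (Set.range_subset_iff.2 fun n => ⟨f n, rfl⟩)

lemma padicValRat_natCast_of_not_dvd {p n : ℕ} (h : ¬p ∣ n) : padicValRat p n = 0 := by
  simp [padicValNat.eq_zero_of_not_dvd h]

lemma padicValRat_add_eq_left {p : ℕ} [Fact p.Prime] {q r : ℚ} (hq : q ≠ 0) (hr : r ≠ 0)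
    (h : padicValRat p q < padicValRat p r) : padicValRat p (q + r) = padicValRat p q := by
  refine padicValRat.add_eq_of_lt (fun hqr => ?_) hq hr h
  rw [eq_neg_of_add_eq_zero_right hqr, padicValRat.neg] at h
  exact h.false

abbrev mordellCurve (k : ℚ) : Affine ℚ := { a₁ := 0, a₂ := 0, a₃ := 0, a₄ := 0, a₆ := k }

section mordellCurve

variable {k x y : ℚ}

lemma mordellCurve_equation_iff : (mordellCurve k).Equation x y ↔ y ^ 2 = x ^ 3 + k := by
  simp [equation_iff]

lemma mordellCurve_nonsingular (hE : y ^ 2 = x ^ 3 + k) (hy : y ≠ 0) :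
    (mordellCurve k).Nonsingular x y := by
  refine (nonsingular_iff x y).2 ⟨mordellCurve_equation_iff.2 hE, Or.inr ?_⟩
  simp only [sub_zero]
  contrapose! hy
  linarith

lemma mordellCurve_exists_add_self (h : (mordellCurve k).Nonsingular x y) (hy : y ≠ 0) :
    ∃ (x' y' : ℚ) (h' : (mordellCurve k).Nonsingular x' y'),
      Point.some x y h + Point.some x y h = Point.some x' y' h' ∧
        x' = (3 * x ^ 2 / (2 * y)) ^ 2 - 2 * x := by
  have hy' : y ≠ (mordellCurve k).negY x y := by
    simp only [negY, sub_zero]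
    contrapose! hy
    linarith
  refine ⟨_, _, nonsingular_add h h fun hxy => hy' hxy.2, Point.add_self_of_Y_ne hy', ?_⟩
  rw [slope_of_Y_ne rfl hy']
  simp only [addX, negY]
  ring

lemma padicValRat_two_two : v₂ 2 = 1 := by
  simpa using padicValRat.self (p := 2) one_lt_two

lemma padicValRat_two_sq_sub_two_mul {L x : ℚ} (hL : L ≠ 0) (hx : x ≠ 0)
    (h : 2 * v₂ L < v₂ x + 1) : v₂ (L ^ 2 - 2 * x) = 2 * v₂ L := by
  have h2x : v₂ (-(2 * x)) = v₂ x + 1 := by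
    rw [padicValRat.neg, padicValRat.mul two_ne_zero hx, padicValRat_two_two, add_comm]
  rw [sub_eq_add_neg, padicValRat_add_eq_left (pow_ne_zero 2 hL) (by simpa using hx),
    padicValRat.pow]
  · push_cast; ring
  · rw [h2x, padicValRat.pow]; push_cast; exact h

lemma padicValRat_two_tangent_slope (hx : x ≠ 0) (hy : y ≠ 0) :
    v₂ (3 * x ^ 2 / (2 * y)) = 2 * v₂ x - v₂ y - 1 := by
  have h3 : v₂ 3 = 0 := by
    simpa using padicValRat_natCast_of_not_dvd (p := 2) (n := 3) (by norm_num)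
  rw [padicValRat.div (by positivity) (by positivity),
    padicValRat.mul three_ne_zero (by positivity), padicValRat.mul two_ne_zero hy,
    padicValRat.pow, padicValRat_two_two, h3]
  push_cast; ring

lemma mordellCurve_exists_add_self_padicValRat_two (h : (mordellCurve k).Nonsingular x y)
    (hx : x ≠ 0) (hy : y ≠ 0) (hv : 3 * v₂ x < 2 * v₂ y + 3) :
    ∃ (x' y' : ℚ) (h' : (mordellCurve k).Nonsingular x' y'),
      Point.some x y h + Point.some x y h = Point.some x' y' h' ∧
        v₂ x' = 4 * v₂ x - 2 * v₂ y - 2 := by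
  obtain ⟨x', y', h', hadd, rfl⟩ := mordellCurve_exists_add_self h hy
  refine ⟨_, y', h', hadd, ?_⟩
  have hL := padicValRat_two_tangent_slope hx hy
  rw [padicValRat_two_sq_sub_two_mul (by positivity) hx (by omega), hL]
  ring

lemma mordellCurve_two_mul_padicValRat_two_y (hk : k ≠ 0) (hk₂ : 0 ≤ v₂ k)
    (hE : y ^ 2 = x ^ 3 + k) (hx : v₂ x < 0) : 2 * v₂ y = 3 * v₂ x := by
  have hx0 : x ≠ 0 := by rintro rfl; simp at hx
  have hx3 : v₂ (x ^ 3) = 3 * v₂ x := by rw [padicValRat.pow]; push_cast; rfl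
  have hy2 : v₂ (y ^ 2) = 2 * v₂ y := by rw [padicValRat.pow]; push_cast; rfl
  rw [← hy2, ← hx3, hE, padicValRat_add_eq_left (pow_ne_zero 3 hx0) hk (by omega)]

lemma mordellCurve_exists_add_self_of_padicValRat_two_neg (hk : k ≠ 0) (hk₂ : 0 ≤ v₂ k)
    (h : (mordellCurve k).Nonsingular x y) (hx : v₂ x < 0) :
    ∃ (x' y' : ℚ) (h' : (mordellCurve k).Nonsingular x' y'),
      Point.some x y h + Point.some x y h = Point.some x' y' h' ∧ v₂ x' = v₂ x - 2 := by
  have hy := mordellCurve_two_mul_padicValRat_two_y hk hk₂ (mordellCurve_equation_iff.1 h.1) hx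
  have hx0 : x ≠ 0 := by rintro rfl; simp at hx
  have hy0 : y ≠ 0 := by rintro rfl; rw [padicValRat.zero] at hy; omega
  obtain ⟨x', y', h', hadd, hv⟩ :=
    mordellCurve_exists_add_self_padicValRat_two h hx0 hy0 (by omega)
  exact ⟨x', y', h', hadd, by omega⟩

lemma mordellCurve_exists_two_pow_nsmul (hk : k ≠ 0) (hk₂ : 0 ≤ v₂ k)
    (h : (mordellCurve k).Nonsingular x y) (hx : v₂ x < 0) (n : ℕ) :
    ∃ (x' y' : ℚ) (h' : (mordellCurve k).Nonsingular x' y'),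
      2 ^ n • Point.some x y h = Point.some x' y' h' ∧ v₂ x' = v₂ x - 2 * n := by
  induction n with
  | zero => exact ⟨x, y, h, one_nsmul _, by simp⟩
  | succ n ih =>
    obtain ⟨x', y', h', hn, hv⟩ := ih
    obtain ⟨x'', y'', h'', hadd, hv'⟩ :=
      mordellCurve_exists_add_self_of_padicValRat_two_neg hk hk₂ h' (by omega)
    refine ⟨x'', y'', h'', ?_, by push_cast; omega⟩
    rw [pow_succ, mul_nsmul, hn, two_nsmul, hadd]

theorem mordellCurve_not_isOfFinAddOrder (hk : k ≠ 0) (hk₂ : 0 ≤ v₂ k)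
    (h : (mordellCurve k).Nonsingular x y) (hx : v₂ x < 0) :
    ¬IsOfFinAddOrder (Point.some x y h) := by
  refine not_isOfFinAddOrder_of_injective_nsmul_comp (f := (2 ^ ·)) fun a b hab => ?_
  obtain ⟨xa, ya, ha, hPa, hva⟩ := mordellCurve_exists_two_pow_nsmul hk hk₂ h hx a
  obtain ⟨xb, yb, hb, hPb, hvb⟩ := mordellCurve_exists_two_pow_nsmul hk hk₂ h hx b
  have hxab : xa = xb := by
    simp only [hPa, hPb, Point.some.injEq] at hab
    exact hab.1
  rw [hxab, hvb] at hva
  omega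

theorem mordellCurve_not_isOfFinAddOrder_of_padicValRat_two_eq_zero (hk : k ≠ 0)
    (hk₂ : 0 ≤ v₂ k) (h : (mordellCurve k).Nonsingular x y) (hx0 : x ≠ 0) (hy0 : y ≠ 0)
    (hx : v₂ x = 0) (hy : 0 ≤ v₂ y) : ¬IsOfFinAddOrder (Point.some x y h) := by
  obtain ⟨x', y', h', hadd, hv'⟩ :=
    mordellCurve_exists_add_self_padicValRat_two h hx0 hy0 (by omega)
  refine fun hfin => mordellCurve_not_isOfFinAddOrder hk hk₂ h' (by omega) ?_
  simpa only [two_nsmul, hadd] using hfin.nsmul (n := 2)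

end mordellCurve

/-- For a prime `ℓ = t² + 27` the point `(ℓ, tℓ)` on `E : y² = x³ - 27ℓ²` has infinite
order; in particular the Mordell–Weil rank of `E` over `ℚ` is at least 1. -/
theorem stmt14 (ℓ : ℕ) (hℓ : ℓ.Prime) (t : ℤ) (ht : (ℓ : ℤ) = t ^ 2 + 27)
    (W : WeierstrassCurve.Affine ℚ)
    (hW : W = { a₁ := 0, a₂ := 0, a₃ := 0, a₄ := 0, a₆ := -27 * (ℓ : ℚ) ^ 2 }) :
    (∃ h : WeierstrassCurve.Affine.Nonsingular W (ℓ : ℚ) ((t : ℚ) * (ℓ : ℚ)),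
        addOrderOf (WeierstrassCurve.Affine.Point.some (h := h)) = 0) ∧
      ∃ f : ℤ →+ WeierstrassCurve.Affine.Point W, Function.Injective f := by
  subst hW
  change (∃ h : (mordellCurve (-27 * (ℓ : ℚ) ^ 2)).Nonsingular ℓ (t * ℓ),
    addOrderOf (Point.some _ _ h) = 0) ∧
      ∃ f : ℤ →+ (mordellCurve (-27 * (ℓ : ℚ) ^ 2)).Point, Injective f
  have hℓ27 : 27 ≤ ℓ := by have := sq_nonneg t; omega
  have hℓ_odd : ¬2 ∣ ℓ := fun h2 => by
    have := (Nat.prime_dvd_prime_iff_eq Nat.prime_two hℓ).1 h2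
    omega
  have ht0 : t ≠ 0 := by
    rintro rfl
    obtain rfl : ℓ = 27 := by omega
    norm_num at hℓ
  have hℓ0 : (ℓ : ℚ) ≠ 0 := by positivity
  have hvℓ : v₂ ℓ = 0 := padicValRat_natCast_of_not_dvd hℓ_odd
  have hvt : 0 ≤ v₂ t := by rw [padicValRat.of_int]; positivity
  have hk : (-27 * (ℓ : ℚ) ^ 2) ≠ 0 := by positivity
  have hk₂ : 0 ≤ v₂ (-27 * (ℓ : ℚ) ^ 2) := by
    rw [show (-27 * (ℓ : ℚ) ^ 2) = ((-27 * ℓ ^ 2 : ℤ) : ℚ) by push_cast; ring, padicValRat.of_int]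
    positivity
  have hP : (mordellCurve (-27 * (ℓ : ℚ) ^ 2)).Nonsingular ℓ (t * ℓ) := by
    refine mordellCurve_nonsingular ?_ (by positivity)
    have htQ : (ℓ : ℚ) = t ^ 2 + 27 := by exact_mod_cast ht
    linear_combination (-(ℓ : ℚ) ^ 2) * htQ
  have hPinf := mordellCurve_not_isOfFinAddOrder_of_padicValRat_two_eq_zero hk hk₂ hP hℓ0
    (by positivity) hvℓ (by rw [padicValRat.mul (by positivity) hℓ0]; omega)
  exact ⟨⟨hP, addOrderOf_eq_zero_iff.2 hPinf⟩, zmultiplesHom _ (Point.some _ _ hP),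
    injective_zsmul_iff_not_isOfFinAddOrder.2 hPinf⟩
end
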